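/- arXiv:1402.2237 — 4 statements merged into one kernel-verified Lean document; each statement's English description precedes it below -/
import Mathlib

section
/- If a set of transactions T is invariant confluent with respect to an invariant I, then there exists a globally I-valid execution strategy that is coordination-free, transactionally available, and convergent: namely, each replica locally checks each transaction's result against I (committing iff valid) and replicas merge states pairwise, and every state ever held by any replica is I-valid. -/
/-- `ReachFrom T I A S`: state `S` is produced from state `A` by a sequence of
transaction applications and merges (set union), every intermediate state being
`I`-valid (this is `I`-`T`-reachability relative to start state `A`). -/
inductive ReachFrom {V : Type} (T : Set (Set V → Set V)) (I : Set V → Prop) :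
    Set V → Set V → Prop where
  | refl (A : Set V) : I A → ReachFrom T I A A
  | txn (A S : Set V) (t : Set V → Set V) : t ∈ T → ReachFrom T I A S → I (t S) →
      ReachFrom T I A (t S)
  | merge (A B S₁ S₂ : Set V) : ReachFrom T I A B → ReachFrom T I B S₁ →
      ReachFrom T I B S₂ → I (S₁ ∪ S₂) → ReachFrom T I A (S₁ ∪ S₂)

/-- `T` is invariant confluent with respect to `I` (from initial state `D₀`):
the merge of any two `I`-`T`-reachable states with a common ancestor is `I`-valid. -/
def IConfluent {V : Type} (T : Set (Set V → Set V)) (I : Set V → Prop) (D₀ : Set V) : Prop :=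
  ∀ B S₁ S₂ : Set V, ReachFrom T I D₀ B → ReachFrom T I B S₁ → ReachFrom T I B S₂ →
    I (S₁ ∪ S₂)

/-- The coordination-free execution strategy: each replica locally checks each
transaction's result against `I` and commits iff valid, and replicas merge states
pairwise (merges are performed unconditionally, with no validity check). -/
inductive Exec {V : Type} (T : Set (Set V → Set V)) (I : Set V → Prop) :
    Set V → Set V → Prop where
  | refl (A : Set V) : Exec T I A A
  | txn (A S : Set V) (t : Set V → Set V) : t ∈ T → Exec T I A S → I (t S) →
      Exec T I A (t S)
  | merge (A B S₁ S₂ : Set V) : Exec T I A B → Exec T I B S₁ → Exec T I B S₂ →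
      Exec T I A (S₁ ∪ S₂)

theorem ReachFrom.valid {V : Type} {T : Set (Set V → Set V)} {I : Set V → Prop}
    {A S : Set V} (h : ReachFrom T I A S) : I S := by
  induction h with
  | refl _ h => exact h
  | txn _ _ _ _ _ h => exact h
  | merge _ _ _ _ _ _ _ h => exact h

theorem ReachFrom.trans {V : Type} {T : Set (Set V → Set V)} {I : Set V → Prop}
    {A B C : Set V} (h₁ : ReachFrom T I A B) (h₂ : ReachFrom T I B C) :
    ReachFrom T I A C := by
  induction h₂ with
  | refl => exact h₁
  | txn _ S t ht _ hI ih => exact ReachFrom.txn _ S t ht (ih h₁) hI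
  | merge _ B' S₁ S₂ hB' h1 h2 hI ih _ _ =>
      exact ReachFrom.merge _ B' S₁ S₂ (ih h₁) h1 h2 hI

theorem exec_reach {V : Type} {T : Set (Set V → Set V)} {I : Set V → Prop}
    {D₀ : Set V} (hconf : IConfluent T I D₀) :
    ∀ {A S : Set V}, Exec T I A S → ReachFrom T I D₀ A → ReachFrom T I A S := by
  intro A S h
  induction h with
  | refl A => exact fun h => ReachFrom.refl A h.valid
  | txn A S t ht _ hI ih => exact fun h => ReachFrom.txn A S t ht (ih h) hI
  | merge A B S₁ S₂ _ _ _ ihB ih1 ih2 =>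
    intro hA
    have hB := ihB hA
    have hDB := hA.trans hB
    have h1 := ih1 hDB
    have h2 := ih2 hDB
    exact ReachFrom.merge A B S₁ S₂ hB h1 h2 (hconf B S₁ S₂ hDB h1 h2)

/-- Sufficiency: if `T` is invariant confluent with respect to `I`, then the
coordination-free, transactionally available, convergent strategy (commit iff
locally valid, merge unconditionally) is globally `I`-valid: every state ever
held by any replica is `I`-valid. -/
theorem iconfluence_sufficient {V : Type} (T : Set (Set V → Set V)) (I : Set V → Prop)
    (D₀ : Set V) (hD₀ : I D₀) (hconf : IConfluent T I D₀) :
    ∀ S : Set V, Exec T I D₀ S → I S := by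
  exact fun S h => ((exec_reach hconf h (ReachFrom.refl D₀ hD₀))).valid
end

section
/- Writing arbitrary values is not invariant confluent with respect to multi-item uniqueness constraints: there exist an I-valid initial state S₀, two transactions T₁, T₂ (each inserting a single version), and I-valid states S₁ = T₁(S₀), S₂ = T₂(S₀) such that I(S₁ ∪ S₂) is false, where I(D) asserts all values of versions in D are distinct. -/
/-- The multi-item uniqueness invariant: all values of (distinct) versions in the
state are distinct. Versions are pairs (id, value). -/
def UniqueValues (D : Set (ℕ × ℕ)) : Prop :=
  ∀ p ∈ D, ∀ q ∈ D, p ≠ q → p.2 ≠ q.2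

/-- Writing arbitrary values is not invariant confluent with respect to
multi-item uniqueness: there are an `I`-valid initial state `S₀` and two
single-insertion transactions `T₁`, `T₂` whose results are each `I`-valid, but
whose set-union merge violates uniqueness. -/
theorem writes_not_iconfluent_uniqueness :
    ∃ (S₀ : Set (ℕ × ℕ)) (T₁ T₂ : Set (ℕ × ℕ) → Set (ℕ × ℕ)) (a b v : ℕ),
      a ≠ b ∧
      (T₁ = fun D => D ∪ {(a, v)}) ∧
      (T₂ = fun D => D ∪ {(b, v)}) ∧
      UniqueValues S₀ ∧
      UniqueValues (T₁ S₀) ∧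
      UniqueValues (T₂ S₀) ∧
      ¬ UniqueValues (T₁ S₀ ∪ T₂ S₀) := by
  refine ⟨∅, _, _, 0, 1, 0, by norm_num, rfl, rfl, ?_, ?_, ?_, ?_⟩
  · intro p hp; exact absurd hp (Set.notMem_empty p)
  · intro p hp q hq hne
    simp only [Set.empty_union, Set.mem_singleton_iff] at hp hq
    exact absurd (hp.trans hq.symm) hne
  · intro p hp q hq hne
    simp only [Set.empty_union, Set.mem_singleton_iff] at hp hq
    exact absurd (hp.trans hq.symm) hne
  · intro h
    have := h (0,0) (Or.inl (Or.inr rfl)) (1,0) (Or.inr (Or.inr rfl)) (by decide)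
    exact this rfl
end

section
/- Concurrent deletion and insertion is not invariant confluent with respect to foreign key constraints: there exist a common ancestor state satisfying the foreign-key invariant I, one branch that inserts a record referencing an existing record, and another branch that (tombstone-)deletes the referenced record, such that both resulting states satisfy I but their merge does not. -/
/-- A record is present in a tombstone-deletion state `(inserts, tombstones)`
iff it has been inserted and not tombstoned. -/
def Present {V : Type} (S : Set V × Set V) (r : V) : Prop :=
  r ∈ S.1 ∧ r ∉ S.2

/-- The foreign-key invariant over tombstone states: every present record with a
non-null foreign key has a present record matching that key. -/
def FKInv {V K : Type} (g : V → Option K) (h : V → K) (S : Set V × Set V) : Prop :=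
  ∀ r, Present S r → ∀ k, g r = some k → ∃ t, Present S t ∧ h t = k

/-- Concurrent deletion and insertion is not invariant confluent with respect
to foreign key constraints: there is an ancestor state satisfying the invariant,
one branch inserting a record that references an existing record, and one branch
tombstone-deleting the referenced record, such that both branches satisfy the
invariant but their componentwise-union merge does not. -/
theorem delete_insert_not_iconfluent_foreign_key :
    ∃ (g : Bool → Option ℕ) (h : Bool → ℕ) (anc S₁ S₂ : Set Bool × Set Bool),
      false ∈ anc.1 ∧
      g true = some (h false) ∧
      S₁ = (insert true anc.1, anc.2) ∧
      S₂ = (anc.1, insert false anc.2) ∧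
      FKInv g h anc ∧
      FKInv g h S₁ ∧
      FKInv g h S₂ ∧
      ¬ FKInv g h (S₁.1 ∪ S₂.1, S₁.2 ∪ S₂.2) := by
  refine ⟨fun b => if b then some 1 else none, fun b => if b then 2 else 1,
    ({false}, ∅), ({true, false}, ∅), ({false}, {false}),
    rfl, rfl, rfl, by simp, ?_, ?_, ?_, ?_⟩
  · rintro r ⟨hr, -⟩ k hk
    simp only [Set.mem_singleton_iff] at hr
    subst hr; simp at hk
  · rintro r - k hk
    refine ⟨false, ⟨by simp [Present], by simp [Present]⟩, ?_⟩
    cases r <;> simp_all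
  · rintro r ⟨hr, hr2⟩ k hk
    simp only [Set.mem_singleton_iff] at hr
    subst hr; simp at hr2
  · intro H
    obtain ⟨t, ⟨ht1, ht2⟩, ht3⟩ := H true ⟨by simp, by simp [Present]⟩ 1 (by simp)
    cases t
    · exact ht2 (by simp)
    · simp at ht3
end

section
/- Cascading deletion and insertion are invariant confluent with respect to foreign key constraints: under a cascading-delete semantics where deleting a key value k also tombstones all records referencing k (in the merged state, a cascade marker for k suppresses all records with foreign key k), the merge of two states satisfying the cascading foreign-key invariant also satisfies it. -/
/-- The cascading foreign-key invariant over states `(R, C)` where `R` is the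
set of inserted records and `C` the set of cascaded (deleted) key values: every
record whose foreign key `k` has not been cascaded has a matching target record
in `R` with key `k` (which, since `k ∉ C`, is not cascaded). -/
def CascadeFK {V K : Type} (g : V → Option K) (h : V → K) (S : Set V × Set K) : Prop :=
  ∀ r ∈ S.1, ∀ k, g r = some k → k ∉ S.2 → ∃ t ∈ S.1, h t = k

/-- Cascading deletion and insertion are invariant confluent with respect to
foreign key constraints: the cascading foreign-key invariant is closed under
componentwise-union merge. -/
theorem cascade_iconfluent_foreign_key {V K : Type} (g : V → Option K) (h : V → K)
    (S₁ S₂ : Set V × Set K)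
    (h₁ : CascadeFK g h S₁) (h₂ : CascadeFK g h S₂) :
    CascadeFK g h (S₁.1 ∪ S₂.1, S₁.2 ∪ S₂.2) := by
  rintro r (hr | hr) k hk hkc
  · obtain ⟨t, ht, htk⟩ := h₁ r hr k hk (fun c => hkc (Or.inl c))
    exact ⟨t, Or.inl ht, htk⟩
  · obtain ⟨t, ht, htk⟩ := h₂ r hr k hk (fun c => hkc (Or.inr c))
    exact ⟨t, Or.inr ht, htk⟩
end
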